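/- Let m ≥ 0 be an integer and set λ = √(2m+1). Then there exist constants a > 0 and D > 0 such that the function u(r) = D r^m (a + r) e^{−r²/2} satisfies, for all r > 0, the radial eigenvalue equation −(1/(2r)) d/dr ( r du/dr ) + (m²/(2r²)) u(r) + (r²/2) u(r) + (λ/(√2 r)) u(r) = (m + 2) u(r). -/

import Mathlib

/-!
In terms of the Euler operator `θ f (s) = s f'(s)` the radial kinetic term is
`-(1/(2r)) (r u')' = -θ²u / (2r²)`, and `θ` maps the Gaussian monomials `gₖ(s) = sᵏ e^{-s²/2}`
to `k gₖ - gₖ₊₂`. Hence the Hamiltonian acts on `gₖ` as multiplication by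
`(m² - k²)/(2r²) + (k + 1) + λ/(√2 r)`. For `u = a gₘ + gₘ₊₁` the `r⁻¹` and `r⁻²` terms
cancel exactly when `λ = √2 a` and `2a² = 2m + 1`, leaving the eigenvalue `m + 2`.
-/

open Real

noncomputable section

def eulerOp (f : ℝ → ℝ) (s : ℝ) : ℝ := s * deriv f s

def gaussMonomial (k : ℕ) (t : ℝ) : ℝ := t ^ k * exp (-t ^ 2 / 2)

def radialHamiltonian (m : ℕ) (lam : ℝ) (u : ℝ → ℝ) (r : ℝ) : ℝ :=
  -(1 / (2 * r)) * deriv (eulerOp u) r + ((m : ℝ) ^ 2 / (2 * r ^ 2)) * u r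
    + (r ^ 2 / 2) * u r + (lam / (sqrt 2 * r)) * u r

end

theorem eulerOp_const_mul_add_const_mul {f g : ℝ → ℝ} (b c : ℝ) (hf : Differentiable ℝ f)
    (hg : Differentiable ℝ g) :
    eulerOp (fun t => b * f t + c * g t) = fun s => b * eulerOp f s + c * eulerOp g s := by
  funext s
  have hd : HasDerivAt (fun t => b * f t + c * g t) (b * deriv f s + c * deriv g s) s :=
    ((hf s).hasDerivAt.const_mul b).add ((hg s).hasDerivAt.const_mul c)
  simp only [eulerOp, hd.deriv]
  ring

theorem differentiable_gaussMonomial (k : ℕ) : Differentiable ℝ (gaussMonomial k) := by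
  unfold gaussMonomial
  fun_prop

theorem gaussMonomial_add (k j : ℕ) (x : ℝ) :
    gaussMonomial (k + j) x = x ^ j * gaussMonomial k x := by
  simp only [gaussMonomial, pow_add]
  ring

theorem eulerOp_gaussMonomial (k : ℕ) :
    eulerOp (gaussMonomial k) = fun s => k * gaussMonomial k s - gaussMonomial (k + 2) s := by
  funext s
  have hexp : HasDerivAt (fun t : ℝ => exp (-t ^ 2 / 2)) (exp (-s ^ 2 / 2) * -s) s := by
    have h : HasDerivAt (fun t : ℝ => -t ^ 2 / 2) (-s) s :=
      ((hasDerivAt_pow 2 s).fun_neg.div_const 2).congr_deriv (by norm_num; ring)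
    exact h.exp
  have hd : HasDerivAt (gaussMonomial k)
      (k * s ^ (k - 1) * exp (-s ^ 2 / 2) + s ^ k * (exp (-s ^ 2 / 2) * -s)) s :=
    (hasDerivAt_pow k s).mul hexp
  rw [eulerOp, hd.deriv]
  -- `s * (k * s ^ (k - 1)) = k * s ^ k` holds also for `k = 0`, where both sides vanish
  rcases k with _ | k
  · simp only [gaussMonomial]
    ring
  · simp only [gaussMonomial, Nat.add_sub_cancel, pow_succ]
    push_cast
    ring

theorem differentiable_eulerOp_gaussMonomial (k : ℕ) :
    Differentiable ℝ (eulerOp (gaussMonomial k)) := by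
  rw [eulerOp_gaussMonomial]
  exact ((differentiable_gaussMonomial k).const_mul _).sub (differentiable_gaussMonomial _)

theorem eulerOp_eulerOp_gaussMonomial (k : ℕ) (x : ℝ) :
    eulerOp (eulerOp (gaussMonomial k)) x =
      (k ^ 2 - (2 * k + 2) * x ^ 2 + x ^ 4) * gaussMonomial k x := by
  have hθ : eulerOp (gaussMonomial k) =
      fun s => (k : ℝ) * gaussMonomial k s + (-1) * gaussMonomial (k + 2) s := by
    rw [eulerOp_gaussMonomial]
    funext s
    ring
  rw [hθ, eulerOp_const_mul_add_const_mul _ _ (differentiable_gaussMonomial _)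
    (differentiable_gaussMonomial _), eulerOp_gaussMonomial, eulerOp_gaussMonomial,
    show k + 2 + 2 = k + 4 from rfl]
  dsimp only
  rw [gaussMonomial_add, gaussMonomial_add]
  push_cast
  ring

theorem radialHamiltonian_eq_of_ne_zero (m : ℕ) (lam : ℝ) (u : ℝ → ℝ) {r : ℝ} (hr : r ≠ 0) :
    radialHamiltonian m lam u r = -(eulerOp (eulerOp u) r) / (2 * r ^ 2)
      + ((m : ℝ) ^ 2 / (2 * r ^ 2)) * u r + (r ^ 2 / 2) * u r + (lam / (sqrt 2 * r)) * u r := by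
  simp only [radialHamiltonian, eulerOp]
  field_simp

theorem radialHamiltonian_gaussMonomial (m k : ℕ) (lam : ℝ) {r : ℝ} (hr : r ≠ 0) :
    radialHamiltonian m lam (gaussMonomial k) r =
      (((m : ℝ) ^ 2 - k ^ 2) / (2 * r ^ 2) + (k + 1) + lam / (sqrt 2 * r))
        * gaussMonomial k r := by
  rw [radialHamiltonian_eq_of_ne_zero m lam _ hr, eulerOp_eulerOp_gaussMonomial]
  field_simp
  ring

theorem radialHamiltonian_const_mul_add_const_mul (m : ℕ) (lam : ℝ) {f g : ℝ → ℝ} (b c : ℝ)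
    (hf : Differentiable ℝ f) (hg : Differentiable ℝ g) {r : ℝ}
    (hf' : DifferentiableAt ℝ (eulerOp f) r) (hg' : DifferentiableAt ℝ (eulerOp g) r) :
    radialHamiltonian m lam (fun t => b * f t + c * g t) r =
      b * radialHamiltonian m lam f r + c * radialHamiltonian m lam g r := by
  have hd : HasDerivAt (fun s => b * eulerOp f s + c * eulerOp g s)
      (b * deriv (eulerOp f) r + c * deriv (eulerOp g) r) r :=
    (hf'.hasDerivAt.const_mul b).add (hg'.hasDerivAt.const_mul c)
  rw [radialHamiltonian, eulerOp_const_mul_add_const_mul b c hf hg, hd.deriv]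
  simp only [radialHamiltonian]
  ring

theorem radialHamiltonian_eigenfunction (m : ℕ) {a lam : ℝ} (hlam : lam = sqrt 2 * a)
    (ha : 2 * a ^ 2 = 2 * m + 1) (D : ℝ) {r : ℝ} (hr : r ≠ 0) :
    radialHamiltonian m lam (fun t => D * t ^ m * (a + t) * exp (-t ^ 2 / 2)) r
      = ((m : ℝ) + 2) * (D * r ^ m * (a + r) * exp (-r ^ 2 / 2)) := by
  have hu : (fun t => D * t ^ m * (a + t) * exp (-t ^ 2 / 2)) =
      fun t => D * a * gaussMonomial m t + D * gaussMonomial (m + 1) t := by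
    funext t
    simp only [gaussMonomial, pow_succ]
    ring
  rw [hu, radialHamiltonian_const_mul_add_const_mul _ _ _ _ (differentiable_gaussMonomial _)
    (differentiable_gaussMonomial _) (differentiable_eulerOp_gaussMonomial _ r)
    (differentiable_eulerOp_gaussMonomial _ r), radialHamiltonian_gaussMonomial _ _ _ hr,
    radialHamiltonian_gaussMonomial _ _ _ hr, gaussMonomial_add, hlam]
  simp only [gaussMonomial]
  field_simp
  push_cast
  linear_combination D * r * ha

theorem exists_pos_sqrt_eq_sqrt_two_mul (m : ℕ) :
    ∃ a : ℝ, 0 < a ∧ sqrt (2 * (m : ℝ) + 1) = sqrt 2 * a ∧ 2 * a ^ 2 = 2 * m + 1 := by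
  refine ⟨sqrt (2 * m + 1) / sqrt 2, by positivity, by field_simp, ?_⟩
  rw [div_pow, sq_sqrt (by positivity), sq_sqrt zero_le_two]
  field_simp

/-- For `λ = √(2m+1)`, there are constants `a, D > 0` such that
`u(r) = D r^m (a + r) e^{-r²/2}` satisfies, for all `r > 0`, the radial
eigenvalue equation
`-(1/(2r)) (r u')' + (m²/(2r²)) u + (r²/2) u + (λ/(√2 r)) u = (m+2) u`
of the relative-motion Hamiltonian of a two-electron parabolic quantum dot. -/
theorem radial_eigenfunction_two_electron_dot (m : ℕ) :
    ∃ a : ℝ, 0 < a ∧ ∃ D : ℝ, 0 < D ∧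
      ∀ r : ℝ, 0 < r →
        -(1 / (2 * r)) *
            deriv (fun s : ℝ =>
              s * deriv (fun t : ℝ => D * t ^ m * (a + t) * Real.exp (-t ^ 2 / 2)) s) r
          + ((m : ℝ) ^ 2 / (2 * r ^ 2)) * (D * r ^ m * (a + r) * Real.exp (-r ^ 2 / 2))
          + (r ^ 2 / 2) * (D * r ^ m * (a + r) * Real.exp (-r ^ 2 / 2))
          + (Real.sqrt (2 * (m : ℝ) + 1) / (Real.sqrt 2 * r)) *
              (D * r ^ m * (a + r) * Real.exp (-r ^ 2 / 2))
        = ((m : ℝ) + 2) * (D * r ^ m * (a + r) * Real.exp (-r ^ 2 / 2)) := by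
  obtain ⟨a, ha, hlam, ha2⟩ := exists_pos_sqrt_eq_sqrt_two_mul m
  exact ⟨a, ha, 1, one_pos, fun r hr =>
    radialHamiltonian_eigenfunction m hlam ha2 1 hr.ne'⟩
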